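/- arXiv:2507.00806 — 6 statements merged into one kernel-verified Lean document; each statement's English description precedes it below -/
import Mathlib

section
/- For every r > 0 there exists a constant C > 0, depending only on r, such that for all real numbers a, b with |a| ≤ |b| one has |(a+b)^r − a^r| ≤ C·|b|^r. -/
/-- Signed power: `spow t r = sign(t) * |t|^r`. For `t ≥ 0` this is the usual real power. -/
noncomputable def spow (t r : ℝ) : ℝ := Real.sign t * |t| ^ r

/-- For every `r > 0` there exists `C > 0`, depending only on `r`, such that for all
real `a, b` with `|a| ≤ |b|` one has `|(a+b)^r − a^r| ≤ C · |b|^r`. -/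
theorem stmt1 (r : ℝ) (hr : 0 < r) :
    ∃ C : ℝ, 0 < C ∧ ∀ a b : ℝ, |a| ≤ |b| →
      |spow (a + b) r - spow a r| ≤ C * |b| ^ r := by
  refine ⟨2 ^ r + 1, by positivity, fun a b hab => ?_⟩
  have hs : ∀ t : ℝ, |spow t r| ≤ |t| ^ r := by
    intro t
    rw [spow, abs_mul, abs_of_nonneg (Real.rpow_nonneg (abs_nonneg t) r)]
    calc |Real.sign t| * |t| ^ r ≤ 1 * |t| ^ r := by
          gcongr
          rcases Real.sign_apply_eq t with h | h | h <;> simp [h]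
      _ = |t| ^ r := one_mul _
  have h1 : |a + b| ^ r ≤ 2 ^ r * |b| ^ r := by
    rw [← Real.mul_rpow (by norm_num) (abs_nonneg b)]
    exact Real.rpow_le_rpow (abs_nonneg _)
      ((abs_add_le a b).trans (by linarith)) hr.le
  have h2 : |a| ^ r ≤ |b| ^ r :=
    Real.rpow_le_rpow (abs_nonneg _) hab hr.le
  calc |spow (a + b) r - spow a r| ≤ |spow (a + b) r| + |spow a r| := abs_sub _ _
    _ ≤ |a + b| ^ r + |a| ^ r := add_le_add (hs _) (hs _)
    _ ≤ 2 ^ r * |b| ^ r + |b| ^ r := add_le_add h1 h2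
    _ = (2 ^ r + 1) * |b| ^ r := by ring
end

section
/- For every r > 1 there exists a constant C > 0, depending only on r, such that for all real numbers a, b with |a| ≤ |b| one has |(a+b)^r − a^r − r·a^{r−1}·b| ≤ C·|b|^r. -/
lemma abs_spow_le (t r : ℝ) : |spow t r| ≤ |t| ^ r := by
  have h1 : |Real.sign t| ≤ 1 := by
    rcases Real.sign_apply_eq t with h | h | h <;> simp [h]
  have hpos : (0:ℝ) ≤ |t| ^ r := Real.rpow_nonneg (abs_nonneg t) r
  calc |spow t r| = |Real.sign t| * |t| ^ r := by
        rw [spow, abs_mul, abs_of_nonneg hpos]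
    _ ≤ 1 * |t| ^ r := by nlinarith
    _ = |t| ^ r := one_mul _

/-- For every `r > 1` there exists `C > 0`, depending only on `r`, such that for all
real `a, b` with `|a| ≤ |b|` one has
`|(a+b)^r − a^r − r·a^(r−1)·b| ≤ C · |b|^r`. -/
theorem stmt3 (r : ℝ) (hr : 1 < r) :
    ∃ C : ℝ, 0 < C ∧ ∀ a b : ℝ, |a| ≤ |b| →
      |spow (a + b) r - spow a r - r * spow a (r - 1) * b| ≤ C * |b| ^ r := by
  refine ⟨2 ^ r + 1 + r, by positivity, fun a b hab => ?_⟩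
  have hb : (0:ℝ) ≤ |b| := abs_nonneg b
  have ht1 : |spow (a + b) r| ≤ 2 ^ r * |b| ^ r := by
    calc |spow (a + b) r| ≤ |a + b| ^ r := abs_spow_le _ _
      _ ≤ (2 * |b|) ^ r := by
          apply Real.rpow_le_rpow (abs_nonneg _)
          · calc |a + b| ≤ |a| + |b| := abs_add_le _ _
              _ ≤ 2 * |b| := by linarith
          · linarith
      _ = 2 ^ r * |b| ^ r := Real.mul_rpow (by norm_num) hb
  have ht2 : |spow a r| ≤ |b| ^ r := by
    calc |spow a r| ≤ |a| ^ r := abs_spow_le _ _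
      _ ≤ |b| ^ r := Real.rpow_le_rpow (abs_nonneg _) hab (by linarith)
  have ht3 : |r * spow a (r - 1) * b| ≤ r * |b| ^ r := by
    have h1 : |spow a (r - 1)| ≤ |b| ^ (r - 1) :=
      (abs_spow_le _ _).trans (Real.rpow_le_rpow (abs_nonneg _) hab (by linarith))
    calc |r * spow a (r - 1) * b| = |r| * |spow a (r - 1)| * |b| := by
          rw [abs_mul, abs_mul]
      _ ≤ r * |b| ^ (r - 1) * |b| := by
          have : |r| = r := abs_of_pos (by linarith)
          rw [this]
          have hr0 : (0:ℝ) ≤ r := by linarith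
          gcongr
      _ = r * |b| ^ r := by
          rw [mul_assoc, ← Real.rpow_add_one' (by linarith) (by linarith)]
          ring_nf
  calc |spow (a + b) r - spow a r - r * spow a (r - 1) * b|
      ≤ |spow (a + b) r| + |spow a r| + |r * spow a (r - 1) * b| := by
        apply (abs_sub _ _).trans
        gcongr
        exact abs_sub _ _
    _ ≤ 2 ^ r * |b| ^ r + |b| ^ r + r * |b| ^ r := by linarith
    _ = (2 ^ r + 1 + r) * |b| ^ r := by ring
end

section
/- For every r ≥ 1 and all real numbers a, b one has |(a+b)^r − a^r| ≤ 2^{r−1}·r·(|a|^{r−1} + |b|^{r−1})·|b|. -/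
/-! Mean value theorem: `t ↦ spow t r` has derivative `r |t|^(r-1)` (at `0` because
`spow t r = |t|^(r-1) t`), and on the segment between `a` and `a + b` this is at most
`r (|a| + |b|)^(r-1) ≤ 2^(r-1) r (|a|^(r-1) + |b|^(r-1))`. -/

open Set Filter Topology Asymptotics

lemma spow_neg (t r : ℝ) : spow (-t) r = -spow t r := by
  simp [spow, Real.sign_neg]

lemma spow_of_pos {t : ℝ} (ht : 0 < t) (r : ℝ) : spow t r = t ^ r := by
  simp [spow, Real.sign_of_pos ht, abs_of_pos ht]

lemma spow_eq_abs_rpow_sub_one_mul (t r : ℝ) : spow t r = |t| ^ (r - 1) * t := by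
  rcases lt_trichotomy t 0 with ht | rfl | ht
  · rw [spow, Real.sign_of_neg ht, Real.rpow_sub_one (abs_ne_zero.2 ht.ne), abs_of_neg ht]
    field_simp
    rw [mul_div_cancel_left₀ _ ht.ne]
  · simp [spow]
  · rw [spow, Real.sign_of_pos ht, Real.rpow_sub_one (abs_ne_zero.2 ht.ne'), abs_of_pos ht]
    field_simp

lemma hasDerivAt_spow_of_pos {r t : ℝ} (ht : 0 < t) :
    HasDerivAt (spow · r) (r * |t| ^ (r - 1)) t := by
  rw [abs_of_pos ht]
  exact (Real.hasDerivAt_rpow_const (Or.inl ht.ne')).congr_of_eventuallyEq <| by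
    filter_upwards [eventually_gt_nhds ht] with x hx using spow_of_pos hx r

lemma hasDerivAt_spow_of_ne_zero {r t : ℝ} (ht : t ≠ 0) :
    HasDerivAt (spow · r) (r * |t| ^ (r - 1)) t := by
  rcases ht.lt_or_gt with ht | ht
  · have h : HasDerivAt (fun x => -spow (-x) r) (-(r * |-t| ^ (r - 1) * -1)) t :=
      ((hasDerivAt_spow_of_pos (neg_pos.2 ht)).comp t (hasDerivAt_neg t)).fun_neg
    simpa [spow_neg] using h
  · exact hasDerivAt_spow_of_pos ht

lemma hasDerivAt_spow_zero {r : ℝ} (hr : 1 < r) : HasDerivAt (spow · r) 0 0 := by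
  rw [hasDerivAt_iff_isLittleO_nhds_zero]
  have hlim : Tendsto (fun h : ℝ => |h| ^ (r - 1)) (𝓝 0) (𝓝 0) := by
    simpa [Real.zero_rpow (sub_pos.2 hr).ne'] using
      (continuous_abs.continuousAt (x := (0 : ℝ))).rpow_const (.inr (sub_pos.2 hr).le) |>.tendsto
  simpa [spow_eq_abs_rpow_sub_one_mul] using
    ((isLittleO_one_iff ℝ).2 hlim).mul_isBigO (isBigO_refl (fun h : ℝ => h) (𝓝 0))

lemma hasDerivAt_spow {r : ℝ} (hr : 1 ≤ r) (t : ℝ) :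
    HasDerivAt (spow · r) (r * |t| ^ (r - 1)) t := by
  rcases eq_or_ne t 0 with rfl | ht
  · rcases hr.eq_or_lt with rfl | hr
    · simpa [spow_eq_abs_rpow_sub_one_mul] using hasDerivAt_id' (x := (0 : ℝ))
    · simpa [Real.zero_rpow (sub_pos.2 hr).ne'] using hasDerivAt_spow_zero hr
  · exact hasDerivAt_spow_of_ne_zero ht

lemma abs_le_abs_add_abs_of_mem_uIcc {a b x : ℝ} (hx : x ∈ uIcc a (a + b)) :
    |x| ≤ |a| + |b| := by
  rcases mem_uIcc.1 hx with ⟨h₁, h₂⟩ | ⟨h₁, h₂⟩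
  · exact (abs_le_max_abs_abs h₁ h₂).trans
      (max_le (le_add_of_nonneg_right (abs_nonneg b)) (abs_add_le a b))
  · exact (abs_le_max_abs_abs h₁ h₂).trans
      (max_le (abs_add_le a b) (le_add_of_nonneg_right (abs_nonneg b)))

lemma Real.add_rpow_le_two_rpow_mul_rpow_add_rpow {x y p : ℝ} (hx : 0 ≤ x) (hy : 0 ≤ y)
    (hp : 0 ≤ p) : (x + y) ^ p ≤ 2 ^ p * (x ^ p + y ^ p) := calc
  (x + y) ^ p ≤ (2 * max x y) ^ p := by rw [two_mul]; gcongr <;> simp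
  _ = 2 ^ p * max x y ^ p := Real.mul_rpow zero_le_two (le_max_of_le_left hx)
  _ = 2 ^ p * max (x ^ p) (y ^ p) := by rw [Real.rpow_max hx hy hp]
  _ ≤ 2 ^ p * (x ^ p + y ^ p) := by
    gcongr; exact max_le_add_of_nonneg (by positivity) (by positivity)

/-- For every `r ≥ 1` and all real `a, b` one has
`|(a+b)^r − a^r| ≤ 2^(r−1) · r · (|a|^(r−1) + |b|^(r−1)) · |b|`. -/
theorem stmt4 (r : ℝ) (hr : 1 ≤ r) (a b : ℝ) :
    |spow (a + b) r - spow a r| ≤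
      (2 : ℝ) ^ (r - 1) * r * (|a| ^ (r - 1) + |b| ^ (r - 1)) * |b| := by
  have hr' : 0 ≤ r - 1 := sub_nonneg.2 hr
  have hderiv : ∀ x ∈ uIcc a (a + b),
      HasDerivWithinAt (spow · r) (r * |x| ^ (r - 1)) (uIcc a (a + b)) x :=
    fun x _ => (hasDerivAt_spow hr x).hasDerivWithinAt
  have hbound : ∀ x ∈ uIcc a (a + b),
      ‖r * |x| ^ (r - 1)‖ ≤ 2 ^ (r - 1) * r * (|a| ^ (r - 1) + |b| ^ (r - 1)) := by
    intro x hx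
    rw [Real.norm_eq_abs, abs_of_nonneg (by positivity)]
    calc r * |x| ^ (r - 1) ≤ r * (|a| + |b|) ^ (r - 1) := by
          gcongr; exact abs_le_abs_add_abs_of_mem_uIcc hx
      _ ≤ r * (2 ^ (r - 1) * (|a| ^ (r - 1) + |b| ^ (r - 1))) := by
          gcongr
          exact Real.add_rpow_le_two_rpow_mul_rpow_add_rpow (abs_nonneg a) (abs_nonneg b) hr'
      _ = 2 ^ (r - 1) * r * (|a| ^ (r - 1) + |b| ^ (r - 1)) := by ring
  simpa using (convex_uIcc a (a + b)).norm_image_sub_le_of_norm_hasDerivWithin_le hderiv hbound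
    left_mem_uIcc right_mem_uIcc
end

section
/- Let n ≥ 1 be an integer and ν > n a real number. Then there exists a constant C > 0, depending only on n and ν, such that for every η ≥ 1 and every q ∈ ℝⁿ with |q| ≥ η one has ∫_{ℝⁿ} (1+|y|)^{−ν} (1+|y+q|)^{−ν} dy ≤ C·η^{−ν}. -/
open MeasureTheory

/-- Let `n ≥ 1` and `ν > n`. There exists `C > 0`, depending only on `n` and `ν`, such that
for every `η ≥ 1` and every `q ∈ ℝⁿ` with `|q| ≥ η`,
`∫ (1+|y|)^(−ν) (1+|y+q|)^(−ν) dy ≤ C·η^(−ν)`. -/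
theorem stmt6 (n : ℕ) (hn : 1 ≤ n) (ν : ℝ) (hν : (n : ℝ) < ν) :
    ∃ C : ℝ, 0 < C ∧ ∀ η : ℝ, 1 ≤ η → ∀ q : EuclideanSpace ℝ (Fin n), η ≤ ‖q‖ →
      (∫ y : EuclideanSpace ℝ (Fin n), (1 + ‖y‖) ^ (-ν) * (1 + ‖y + q‖) ^ (-ν)) ≤
        C * η ^ (-ν) := by
  have hdim : (Module.finrank ℝ (EuclideanSpace ℝ (Fin n)) : ℝ) < ν := by
    simpa using hν
  have hint : Integrable (fun y : EuclideanSpace ℝ (Fin n) => (1 + ‖y‖) ^ (-ν)) :=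
    integrable_one_add_norm hdim
  set I : ℝ := ∫ y : EuclideanSpace ℝ (Fin n), (1 + ‖y‖) ^ (-ν) with hI
  have hInn : 0 ≤ I := integral_nonneg fun y => Real.rpow_nonneg (by positivity) _
  refine ⟨2 * 2 ^ ν * I + 1, by positivity, ?_⟩
  intro η hη q hq
  have hη0 : (0:ℝ) < η := by linarith
  have hη2 : (0:ℝ) < η / 2 := by linarith
  have hintq : Integrable (fun y : EuclideanSpace ℝ (Fin n) => (1 + ‖y + q‖) ^ (-ν)) :=
    hint.comp_add_right q
  have hbound : ∀ y : EuclideanSpace ℝ (Fin n),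
      (1 + ‖y‖) ^ (-ν) * (1 + ‖y + q‖) ^ (-ν) ≤
        (η / 2) ^ (-ν) * ((1 + ‖y‖) ^ (-ν) + (1 + ‖y + q‖) ^ (-ν)) := by
    intro y
    have hkey : η / 2 ≤ ‖y‖ ∨ η / 2 ≤ ‖y + q‖ := by
      by_contra h
      push_neg at h
      have h1 : ‖q‖ ≤ ‖y + q‖ + ‖y‖ := by
        simpa [add_sub_cancel_left] using norm_sub_le (y + q) y
      linarith [h.1, h.2]
    have h1 : (0:ℝ) ≤ (1 + ‖y‖) ^ (-ν) := Real.rpow_nonneg (by positivity) _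
    have h2 : (0:ℝ) ≤ (1 + ‖y + q‖) ^ (-ν) := Real.rpow_nonneg (by positivity) _
    rcases hkey with hk | hk
    · have h3 : (1 + ‖y‖) ^ (-ν) ≤ (η / 2) ^ (-ν) := by
        apply Real.rpow_le_rpow_of_nonpos hη2 (by linarith [norm_nonneg y]) (by linarith)
      nlinarith [Real.rpow_nonneg hη2.le (-ν)]
    · have h3 : (1 + ‖y + q‖) ^ (-ν) ≤ (η / 2) ^ (-ν) := by
        apply Real.rpow_le_rpow_of_nonpos hη2 (by linarith [norm_nonneg (y + q)]) (by linarith)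
      nlinarith [Real.rpow_nonneg hη2.le (-ν)]
  have hmono : (∫ y : EuclideanSpace ℝ (Fin n), (1 + ‖y‖) ^ (-ν) * (1 + ‖y + q‖) ^ (-ν)) ≤
      ∫ y : EuclideanSpace ℝ (Fin n),
        (η / 2) ^ (-ν) * ((1 + ‖y‖) ^ (-ν) + (1 + ‖y + q‖) ^ (-ν)) := by
    apply integral_mono_of_nonneg
    · filter_upwards with y
      exact mul_nonneg (Real.rpow_nonneg (by positivity) _) (Real.rpow_nonneg (by positivity) _)
    · exact ((hint.add hintq).const_mul _)
    · filter_upwards with y using hbound y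
  have heq : (∫ y : EuclideanSpace ℝ (Fin n),
      (η / 2) ^ (-ν) * ((1 + ‖y‖) ^ (-ν) + (1 + ‖y + q‖) ^ (-ν))) =
      (η / 2) ^ (-ν) * (I + I) := by
    rw [integral_const_mul, integral_add hint hintq, hI]
    congr 1
    exact congrArg (I + ·) (integral_add_right_eq_self (fun y : EuclideanSpace ℝ (Fin n) => (1 + ‖y‖) ^ (-ν)) q)
  have hpow : (η / 2) ^ (-ν) = 2 ^ ν * η ^ (-ν) := by
    rw [Real.div_rpow hη0.le (by norm_num), Real.rpow_neg (by norm_num : (0:ℝ) ≤ 2)]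
    have h2 : (0:ℝ) < 2 ^ ν := Real.rpow_pos_of_pos (by norm_num) _
    field_simp
  have hηpow : (0:ℝ) ≤ η ^ (-ν) := Real.rpow_nonneg hη0.le _
  calc (∫ y : EuclideanSpace ℝ (Fin n), (1 + ‖y‖) ^ (-ν) * (1 + ‖y + q‖) ^ (-ν))
      ≤ (η / 2) ^ (-ν) * (I + I) := hmono.trans heq.le
    _ = (2 * 2 ^ ν * I) * η ^ (-ν) := by rw [hpow]; ring
    _ ≤ (2 * 2 ^ ν * I + 1) * η ^ (-ν) := by nlinarith
end

section
/- Let n ≥ 1 be an integer and ν > n/2 a real number. Then there exists a constant C > 0, depending only on n and ν, such that for every R > 0, all points q₁, q₂ ∈ ℝⁿ, and every measurable set A ⊆ {x ∈ ℝⁿ : |x−q₁| ≥ R and |x−q₂| ≥ R}, one has ∫_A |x−q₁|^{−ν} · |x−q₂|^{−ν} dx ≤ C · R^{n−2ν}. -/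
/-! AM–GM gives `|x-q₁|^(-ν) |x-q₂|^(-ν) ≤ (|x-q₁|^(-2ν) + |x-q₂|^(-2ν)) / 2`, so it suffices to
integrate one power over the exterior of a ball. In polar coordinates,
`∫_{|y| ≥ R} |y|^(-2ν) dy = n |B₁| ∫_R^∞ ρ^(n-1-2ν) dρ = n |B₁| R^(n-2ν) / (2ν-n)`,
which is finite exactly because `2ν > n`. -/

open MeasureTheory Set Metric Module

theorem setIntegral_mul_le_half_add_sq {α : Type*} [MeasurableSpace α] {μ : Measure α}
    {f g : α → ℝ} {A S T : Set α}
    (hf : AEStronglyMeasurable f (μ.restrict A)) (hg : AEStronglyMeasurable g (μ.restrict A))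
    (hfS : IntegrableOn (fun x ↦ f x ^ 2) S μ) (hgT : IntegrableOn (fun x ↦ g x ^ 2) T μ)
    (hAS : A ⊆ S) (hAT : A ⊆ T) :
    ∫ x in A, f x * g x ∂μ ≤ (∫ x in S, f x ^ 2 ∂μ + ∫ x in T, g x ^ 2 ∂μ) / 2 := by
  have hbound : IntegrableOn (fun x ↦ (f x ^ 2 + g x ^ 2) / 2) A μ :=
    ((hfS.mono_set hAS).add (hgT.mono_set hAT)).div_const 2
  have hfg : IntegrableOn (fun x ↦ f x * g x) A μ := by
    refine hbound.mono' (hf.mul hg) (.of_forall fun x ↦ ?_)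
    rw [norm_mul, Real.norm_eq_abs, Real.norm_eq_abs, le_div_iff₀ two_pos, ← sq_abs (f x),
      ← sq_abs (g x)]
    nlinarith [two_mul_le_add_sq |f x| |g x|]
  calc ∫ x in A, f x * g x ∂μ ≤ ∫ x in A, (f x ^ 2 + g x ^ 2) / 2 ∂μ :=
        setIntegral_mono hfg hbound fun x ↦ by nlinarith [two_mul_le_add_sq (f x) (g x)]
    _ = (∫ x in A, f x ^ 2 ∂μ + ∫ x in A, g x ^ 2 ∂μ) / 2 := by
        rw [integral_div, integral_add (hfS.mono_set hAS) (hgT.mono_set hAT)]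
    _ ≤ (∫ x in S, f x ^ 2 ∂μ + ∫ x in T, g x ^ 2 ∂μ) / 2 := by
        have hS := setIntegral_mono_set (s := A) hfS (.of_forall fun x ↦ sq_nonneg (f x))
          (.of_forall hAS)
        have hT := setIntegral_mono_set (s := A) hgT (.of_forall fun x ↦ sq_nonneg (g x))
          (.of_forall hAT)
        linarith

section Radial

variable {d : ℕ} {r R : ℝ}

theorem pow_mul_indicator_rpow_neg (hd : 1 ≤ d) {y : ℝ} (hy : 0 < y) :
    y ^ (d - 1) * (Ici R).indicator (fun t ↦ t ^ (-r)) y =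
      (Ici R).indicator (fun t ↦ t ^ ((d : ℝ) - r - 1)) y := by
  by_cases hyR : y ∈ Ici R
  · rw [indicator_of_mem hyR, indicator_of_mem hyR, ← Real.rpow_natCast, ← Real.rpow_add hy]
    push_cast [hd]
    ring_nf
  · simp [hyR]

theorem integrableOn_Ioi_pow_mul_indicator_rpow_neg (hd : 1 ≤ d) (hr : d < r) (hR : 0 < R) :
    IntegrableOn (fun y ↦ y ^ (d - 1) * (Ici R).indicator (fun t ↦ t ^ (-r)) y) (Ioi 0) := by
  refine (integrableOn_congr_fun (fun y hy ↦ pow_mul_indicator_rpow_neg hd hy)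
    measurableSet_Ioi).2 ?_
  have hIci : IntegrableOn (fun t ↦ t ^ ((d : ℝ) - r - 1)) (Ici R) :=
    (integrableOn_Ici_iff_integrableOn_Ioi (by simp)).2
      (integrableOn_Ioi_rpow_of_lt (by linarith) hR)
  exact ((integrable_indicator_iff measurableSet_Ici).2 hIci).integrableOn

theorem integral_Ioi_pow_mul_indicator_rpow_neg (hd : 1 ≤ d) (hr : d < r) (hR : 0 < R) :
    ∫ y in Ioi 0, y ^ (d - 1) * (Ici R).indicator (fun t ↦ t ^ (-r)) y =
      R ^ ((d : ℝ) - r) / (r - d) := by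
  rw [setIntegral_congr_fun measurableSet_Ioi (fun y hy ↦ pow_mul_indicator_rpow_neg hd hy),
    setIntegral_indicator measurableSet_Ici, inter_eq_right.2 (Ici_subset_Ioi.2 hR),
    integral_Ici_eq_integral_Ioi, integral_Ioi_rpow_of_lt (by linarith) hR, sub_add_cancel,
    neg_div, ← div_neg, neg_sub]

end Radial

theorem indicator_setOf_le_norm_sub {E : Type*} [SeminormedAddGroup E] (g : ℝ → ℝ) (R : ℝ)
    (q : E) :
    {x | R ≤ ‖x - q‖}.indicator (fun x ↦ g ‖x - q‖) = fun x ↦ (Ici R).indicator g ‖x - q‖ :=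
  funext fun _ ↦ indicator_comp_right (fun x ↦ ‖x - q‖)

section Tail

variable {E : Type*} [NormedAddCommGroup E] [NormedSpace ℝ E] [FiniteDimensional ℝ E]
  [MeasurableSpace E] [BorelSpace E] [Nontrivial E] (μ : Measure E) [μ.IsAddHaarMeasure]
  {r R : ℝ}

theorem integrableOn_norm_sub_rpow_neg_setOf_le (hr : finrank ℝ E < r) (hR : 0 < R) (q : E) :
    IntegrableOn (fun x ↦ ‖x - q‖ ^ (-r)) {x | R ≤ ‖x - q‖} μ := by
  have hmeas : MeasurableSet {x : E | R ≤ ‖x - q‖} := measurableSet_le (by fun_prop) (by fun_prop)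
  rw [← integrable_indicator_iff hmeas, indicator_setOf_le_norm_sub (fun t ↦ t ^ (-r))]
  refine Integrable.comp_sub_right (f := fun x ↦ (Ici R).indicator (fun t ↦ t ^ (-r)) ‖x‖) ?_ q
  exact (integrable_fun_norm_addHaar μ).2
    (integrableOn_Ioi_pow_mul_indicator_rpow_neg finrank_pos hr hR)

theorem setIntegral_norm_sub_rpow_neg_setOf_le (hr : finrank ℝ E < r) (hR : 0 < R) (q : E) :
    ∫ x in {x | R ≤ ‖x - q‖}, ‖x - q‖ ^ (-r) ∂μ =
      finrank ℝ E * μ.real (ball 0 1) / (r - finrank ℝ E) * R ^ ((finrank ℝ E : ℝ) - r) := by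
  have hmeas : MeasurableSet {x : E | R ≤ ‖x - q‖} := measurableSet_le (by fun_prop) (by fun_prop)
  rw [← integral_indicator hmeas, indicator_setOf_le_norm_sub (fun t ↦ t ^ (-r)),
    integral_sub_right_eq_self (fun x ↦ (Ici R).indicator (fun t ↦ t ^ (-r)) ‖x‖) q,
    integral_fun_norm_addHaar μ]
  simp only [nsmul_eq_mul, smul_eq_mul]
  rw [integral_Ioi_pow_mul_indicator_rpow_neg finrank_pos hr hR]
  ring

end Tail

/-- For `n ≥ 1` and `ν > n/2` there is `C > 0` (depending only on `n, ν`) such that for every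
`R > 0`, all `q₁, q₂ ∈ ℝⁿ` and every measurable `A ⊆ {x : |x−q₁| ≥ R, |x−q₂| ≥ R}`,
`∫_A |x−q₁|^(−ν) |x−q₂|^(−ν) dx ≤ C · R^(n−2ν)`. -/
theorem stmt13 (n : ℕ) (hn : 1 ≤ n) (ν : ℝ) (hν : (n : ℝ) / 2 < ν) :
    ∃ C : ℝ, 0 < C ∧ ∀ R : ℝ, 0 < R → ∀ q₁ q₂ : EuclideanSpace ℝ (Fin n),
      ∀ A : Set (EuclideanSpace ℝ (Fin n)), MeasurableSet A →
        A ⊆ {x | R ≤ ‖x - q₁‖ ∧ R ≤ ‖x - q₂‖} →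
        (∫ x in A, ‖x - q₁‖ ^ (-ν) * ‖x - q₂‖ ^ (-ν)) ≤ C * R ^ ((n : ℝ) - 2 * ν) := by
  have : Nontrivial (EuclideanSpace ℝ (Fin n)) :=
    Module.nontrivial_of_finrank_pos (R := ℝ) (by rw [finrank_euclideanSpace_fin]; exact hn)
  have hr : (finrank ℝ (EuclideanSpace ℝ (Fin n)) : ℝ) < 2 * ν := by
    rw [finrank_euclideanSpace_fin]; linarith
  have hsq (y : EuclideanSpace ℝ (Fin n)) : (‖y‖ ^ (-ν)) ^ 2 = ‖y‖ ^ (-(2 * ν)) := by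
    rw [← Real.rpow_mul_natCast (norm_nonneg y)]; ring_nf
  refine ⟨n * volume.real (ball (0 : EuclideanSpace ℝ (Fin n)) 1) / (2 * ν - n), ?_, ?_⟩
  · have : (0 : ℝ) < 2 * ν - n := by linarith
    have : 0 < volume.real (ball (0 : EuclideanSpace ℝ (Fin n)) 1) :=
      ENNReal.toReal_pos (measure_ball_pos _ _ one_pos).ne' measure_ball_lt_top.ne
    positivity
  intro R hR q₁ q₂ A _ hA
  have hint := integrableOn_norm_sub_rpow_neg_setOf_le volume hr hR
  have htail := setIntegral_norm_sub_rpow_neg_setOf_le volume hr hR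
  simp only [finrank_euclideanSpace_fin] at htail
  calc _ ≤ _ := setIntegral_mul_le_half_add_sq
          (S := {x | R ≤ ‖x - q₁‖}) (T := {x | R ≤ ‖x - q₂‖})
          (Measurable.aestronglyMeasurable (by fun_prop))
          (Measurable.aestronglyMeasurable (by fun_prop))
          (by simpa only [hsq] using hint q₁) (by simpa only [hsq] using hint q₂)
          (fun x hx ↦ (hA hx).1) (fun x hx ↦ (hA hx).2)
    _ = _ := by simp only [hsq, htail]; ring
end

section
/- Let n ≥ 1 be an integer, let ν > n and ρ > ν be real numbers, let β > 0 and c₀ ∈ ℝ, and let f, g : ℝⁿ → ℝ be measurable functions such that |f(x)| ≤ β(1+|x|)^{−ρ} and |g(x)| ≤ β(1+|x|)^{−ν} for all x, and such that |x|^ν · g(x) → c₀ as |x| → ∞. Then |q|^ν · ∫_{ℝⁿ} f(y) · g(y − q) dy → c₀ · ∫_{ℝⁿ} f(y) dy as |q| → ∞. -/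
/-!
Split the integral at the bisector `‖y‖ = ‖y - q‖`. Where `y` is at least as close to `0` as
to `q`, we have `‖q‖ ≤ 2 ‖y - q‖`, so `‖q‖^ν g(y - q)` is bounded by `2^ν sup ‖x‖^ν |g x|` and
tends to `c₀` for each fixed `y`; dominated convergence gives `c₀ ∫ f`. The translation
`y = z + q` turns the other half into an integral of the same shape with `f` and `g` exchanged
and `q` replaced by `-q`; since `ρ > ν`, `‖x‖^ν f(x) → 0`, so that half tends to `0`.
-/

open MeasureTheory Filter Bornology Asymptotics Topology Set

section Asymptotics

variable {E : Type*} [SeminormedAddCommGroup E]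

instance isCountablyGenerated_cobounded : (cobounded E).IsCountablyGenerated := by
  rw [← comap_norm_atTop]
  infer_instance

lemma isEquivalent_norm_const_sub (y : E) :
    (fun q : E ↦ ‖y - q‖) ~[cobounded E] (fun q ↦ ‖q‖) := by
  have hbdd : (fun q : E ↦ ‖y - q‖ - ‖q‖) =O[cobounded E] (fun _ ↦ (1 : ℝ)) :=
    IsBigO.of_bound ‖y‖ <| Eventually.of_forall fun q ↦ by
      have h := abs_norm_sub_norm_le (y - q) (-q)
      rw [norm_neg, sub_neg_eq_add, sub_add_cancel] at h
      simpa using h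
  exact hbdd.trans_isLittleO <| isLittleO_one_left_iff ℝ |>.2 <| by
    simpa using tendsto_norm_cobounded_atTop

lemma Filter.Tendsto.norm_rpow_mul_comp_const_sub {g : E → ℝ} {ν c : ℝ}
    (hg : Tendsto (fun x ↦ ‖x‖ ^ ν * g x) (cobounded E) (𝓝 c)) (y : E) :
    Tendsto (fun q ↦ ‖q‖ ^ ν * g (y - q)) (cobounded E) (𝓝 c) := by
  have hequiv : (fun q ↦ ‖y - q‖ ^ ν * g (y - q)) ~[cobounded E]
      (fun q ↦ ‖q‖ ^ ν * g (y - q)) :=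
    ((isEquivalent_norm_const_sub y).rpow (fun _ ↦ norm_nonneg _)).mul IsEquivalent.refl
  exact hequiv.tendsto_nhds (hg.comp (tendsto_const_sub_cobounded y))

lemma norm_mul_norm_rpow_mul_le_of_norm_le_two_mul {g : E → ℝ} {ν M : ℝ} (hν : 0 ≤ ν)
    (hgM : ∀ x, ‖x‖ ^ ν * |g x| ≤ M) {q x : E} (h : ‖q‖ ≤ 2 * ‖x‖) (a : ℝ) :
    ‖a * (‖q‖ ^ ν * g x)‖ ≤ ‖a‖ * (2 ^ ν * M) := by
  rw [norm_mul, Real.norm_eq_abs (_ * _), abs_mul, abs_of_nonneg (by positivity)]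
  refine mul_le_mul_of_nonneg_left ?_ (norm_nonneg a)
  calc ‖q‖ ^ ν * |g x| ≤ (2 * ‖x‖) ^ ν * |g x| := by gcongr
    _ = 2 ^ ν * (‖x‖ ^ ν * |g x|) := by rw [Real.mul_rpow zero_le_two (norm_nonneg x)]; ring
    _ ≤ 2 ^ ν * M := by gcongr; exact hgM x

end Asymptotics

section Integral

variable {E : Type*} [NormedAddCommGroup E] [MeasurableSpace E] [BorelSpace E]
  {μ : Measure E} [μ.IsAddRightInvariant] {f g : E → ℝ} {ν M c : ℝ}

lemma integrableOn_mul_norm_rpow_mul_comp_sub (hν : 0 ≤ ν) (hf : Integrable f μ)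
    (hg : AEStronglyMeasurable g μ) (hgM : ∀ x, ‖x‖ ^ ν * |g x| ≤ M) {q : E} {s : Set E}
    (hs : MeasurableSet s) (hs_le : ∀ y ∈ s, ‖q‖ ≤ 2 * ‖y - q‖) :
    IntegrableOn (fun y ↦ f y * (‖q‖ ^ ν * g (y - q))) s μ := by
  refine ((hf.norm.mul_const (2 ^ ν * M)).integrableOn).mono'
    (hf.aestronglyMeasurable.mul ((hg.comp_measurePreserving
      (measurePreserving_sub_right μ q)).const_mul _)).restrict
    (ae_restrict_of_forall_mem hs fun y hy ↦ ?_)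
  exact norm_mul_norm_rpow_mul_le_of_norm_le_two_mul hν hgM (hs_le y hy) _

theorem tendsto_setIntegral_mul_norm_rpow_mul_comp_sub (hν : 0 ≤ ν) (hf : Integrable f μ)
    (hg : AEStronglyMeasurable g μ) (hgM : ∀ x, ‖x‖ ^ ν * |g x| ≤ M)
    (hgc : Tendsto (fun x ↦ ‖x‖ ^ ν * g x) (cobounded E) (𝓝 c)) {s : E → Set E}
    (hs : ∀ q, MeasurableSet (s q)) (hs_le : ∀ q, ∀ y ∈ s q, ‖q‖ ≤ 2 * ‖y - q‖)
    (hs_ev : ∀ y, ∀ᶠ q in cobounded E, y ∈ s q) :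
    Tendsto (fun q ↦ ∫ y in s q, f y * (‖q‖ ^ ν * g (y - q)) ∂μ) (cobounded E)
      (𝓝 (∫ y, f y * c ∂μ)) := by
  have hM : 0 ≤ M := (by positivity : 0 ≤ ‖(0 : E)‖ ^ ν * |g 0|).trans (hgM 0)
  simp_rw [← integral_indicator (hs _)]
  refine tendsto_integral_filter_of_dominated_convergence (fun y ↦ ‖f y‖ * (2 ^ ν * M))
    (Eventually.of_forall fun q ↦ ?_) (Eventually.of_forall fun q ↦ ?_)
    (hf.norm.mul_const _) (Eventually.of_forall fun y ↦ ?_)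
  · exact ((hf.aestronglyMeasurable.mul ((hg.comp_measurePreserving
      (measurePreserving_sub_right μ q)).const_mul _)).indicator (hs q))
  · refine Eventually.of_forall fun y ↦ ?_
    by_cases hy : y ∈ s q
    · rw [indicator_of_mem hy]
      exact norm_mul_norm_rpow_mul_le_of_norm_le_two_mul hν hgM (hs_le q y hy) _
    · rw [indicator_of_notMem hy, norm_zero]
      positivity
  · refine ((hgc.norm_rpow_mul_comp_const_sub y).const_mul (f y)).congr' ?_
    filter_upwards [hs_ev y] with q hq
    rw [indicator_of_mem hq]

theorem tendsto_norm_rpow_mul_integral_mul_comp_sub (hν : 0 ≤ ν) (hf : Integrable f μ)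
    (hg : Integrable g μ) (hfM : ∀ x, ‖x‖ ^ ν * |f x| ≤ M) (hgM : ∀ x, ‖x‖ ^ ν * |g x| ≤ M)
    (hf0 : Tendsto (fun x ↦ ‖x‖ ^ ν * f x) (cobounded E) (𝓝 0))
    (hgc : Tendsto (fun x ↦ ‖x‖ ^ ν * g x) (cobounded E) (𝓝 c)) :
    Tendsto (fun q ↦ ‖q‖ ^ ν * ∫ y, f y * g (y - q) ∂μ) (cobounded E)
      (𝓝 (c * ∫ y, f y ∂μ)) := by
  set near : E → Set E := fun q ↦ {y | ‖y‖ ≤ ‖y - q‖}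
  set far : E → Set E := fun q ↦ {y | ‖y‖ < ‖y - q‖}
  have near_meas (q : E) : MeasurableSet (near q) := measurableSet_le (by fun_prop) (by fun_prop)
  have far_meas (q : E) : MeasurableSet (far q) := measurableSet_lt (by fun_prop) (by fun_prop)
  have near_le (q : E) (y) (hy : y ∈ near q) : ‖q‖ ≤ 2 * ‖y - q‖ := by
    linarith [norm_le_norm_add_norm_sub' q y, norm_sub_rev q y, hy.out]
  have far_le (q : E) (y) (hy : y ∈ far q) : ‖q‖ ≤ 2 * ‖y - q‖ := near_le q y hy.out.le
  have far_ev (y : E) : ∀ᶠ q in cobounded E, y ∈ far q :=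
    (tendsto_norm_cobounded_atTop.comp (tendsto_const_sub_cobounded y)).eventually_gt_atTop _
  have near_ev (y : E) : ∀ᶠ q in cobounded E, y ∈ near q :=
    (far_ev y).mono fun _ hy ↦ show ‖y‖ ≤ _ from hy.out.le
  have hsplit (q : E) : ‖q‖ ^ ν * ∫ y, f y * g (y - q) ∂μ =
      (∫ y in near q, f y * (‖q‖ ^ ν * g (y - q)) ∂μ) +
        ∫ z in far (-q), g z * (‖-q‖ ^ ν * f (z - -q)) ∂μ := by
    have htrans := measurePreserving_add_right μ q
    have hemb := measurableEmbedding_addRight q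
    have hpre : (· + q) ⁻¹' (near q)ᶜ = far (-q) := by
      ext z
      simp [near, far]
    have hcomp : (fun y ↦ f y * (‖q‖ ^ ν * g (y - q))) ∘ (· + q) =
        fun z ↦ g z * (‖-q‖ ^ ν * f (z - -q)) := by
      ext z
      simp only [Function.comp_apply, add_sub_cancel_right, norm_neg, sub_neg_eq_add]
      ring
    have hint : Integrable (fun y ↦ f y * (‖q‖ ^ ν * g (y - q))) μ := by
      rw [← integrableOn_univ, ← union_compl_self (near q)]
      refine (integrableOn_mul_norm_rpow_mul_comp_sub hν hf hg.aestronglyMeasurable hgM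
        (near_meas q) (near_le q)).union ?_
      rw [← htrans.integrableOn_comp_preimage hemb, hpre, hcomp]
      exact integrableOn_mul_norm_rpow_mul_comp_sub hν hg hf.aestronglyMeasurable hfM
        (far_meas (-q)) (far_le (-q))
    simp_rw [← integral_const_mul, mul_left_comm (‖q‖ ^ ν)]
    rw [← integral_add_compl (near_meas q) hint,
      ← htrans.setIntegral_preimage_emb hemb _ (near q)ᶜ, hpre]
    exact congrArg _ (congrArg (integral _) hcomp)
  have hnear := tendsto_setIntegral_mul_norm_rpow_mul_comp_sub hν hf hg.aestronglyMeasurable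
    hgM hgc near_meas near_le near_ev
  have hfar := (tendsto_setIntegral_mul_norm_rpow_mul_comp_sub hν hg hf.aestronglyMeasurable
    hfM hf0 far_meas far_le far_ev).comp tendsto_neg_cobounded
  simpa [hsplit, integral_mul_const, mul_comm c] using hnear.add hfar

end Integral

section Decay

variable {E : Type*} [SeminormedAddCommGroup E] {h : E → ℝ} {β ν σ : ℝ}

lemma norm_rpow_mul_abs_le_of_abs_le (hν : 0 ≤ ν)
    (hh : ∀ x, |h x| ≤ β * (1 + ‖x‖) ^ (-σ)) (x : E) :
    ‖x‖ ^ ν * |h x| ≤ β * (1 + ‖x‖) ^ (ν - σ) := by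
  have hx : 0 < 1 + ‖x‖ := by positivity
  calc ‖x‖ ^ ν * |h x| ≤ (1 + ‖x‖) ^ ν * (β * (1 + ‖x‖) ^ (-σ)) := by
        gcongr
        · linarith
        · exact hh x
    _ = β * (1 + ‖x‖) ^ (ν - σ) := by rw [sub_eq_add_neg, Real.rpow_add hx]; ring

lemma norm_rpow_mul_abs_le_const (hβ : 0 ≤ β) (hν : 0 ≤ ν) (hνσ : ν ≤ σ)
    (hh : ∀ x, |h x| ≤ β * (1 + ‖x‖) ^ (-σ)) (x : E) : ‖x‖ ^ ν * |h x| ≤ β := by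
  refine (norm_rpow_mul_abs_le_of_abs_le hν hh x).trans (mul_le_of_le_one_right hβ ?_)
  exact Real.rpow_le_one_of_one_le_of_nonpos (by simp) (by linarith)

lemma tendsto_norm_rpow_mul_of_abs_le (hν : 0 ≤ ν) (hνσ : ν < σ)
    (hh : ∀ x, |h x| ≤ β * (1 + ‖x‖) ^ (-σ)) :
    Tendsto (fun x ↦ ‖x‖ ^ ν * h x) (cobounded E) (𝓝 0) := by
  have hlim : Tendsto (fun x : E ↦ β * (1 + ‖x‖) ^ (ν - σ)) (cobounded E) (𝓝 0) := by
    have := (tendsto_rpow_neg_atTop (sub_pos.2 hνσ)).comp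
      (tendsto_atTop_add_const_left _ 1 (tendsto_norm_cobounded_atTop (E := E)))
    simpa [Function.comp_def] using this.const_mul β
  refine squeeze_zero_norm (fun x ↦ ?_) hlim
  rw [norm_mul, Real.norm_of_nonneg (by positivity), Real.norm_eq_abs]
  exact norm_rpow_mul_abs_le_of_abs_le hν hh x

end Decay

lemma integrable_of_abs_le_one_add_norm_rpow_neg {E : Type*} [NormedAddCommGroup E]
    [NormedSpace ℝ E] [FiniteDimensional ℝ E] [MeasurableSpace E] [BorelSpace E]
    {μ : Measure E} [μ.IsAddHaarMeasure] {h : E → ℝ} {β σ : ℝ} (hm : AEStronglyMeasurable h μ)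
    (hσ : (Module.finrank ℝ E : ℝ) < σ) (hh : ∀ x, |h x| ≤ β * (1 + ‖x‖) ^ (-σ)) :
    Integrable h μ :=
  ((integrable_one_add_norm hσ).const_mul β).mono' hm (Eventually.of_forall hh)

theorem stmt14_general (n : ℕ) (ν ρ β c₀ : ℝ) (hν : (n : ℝ) < ν) (hρ : ν < ρ)
    (hβ : 0 < β)
    (f g : EuclideanSpace ℝ (Fin n) → ℝ) (hf : Measurable f) (hg : Measurable g)
    (hfb : ∀ x, |f x| ≤ β * (1 + ‖x‖) ^ (-ρ))
    (hgb : ∀ x, |g x| ≤ β * (1 + ‖x‖) ^ (-ν))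
    (hgas : Filter.Tendsto (fun x : EuclideanSpace ℝ (Fin n) => ‖x‖ ^ ν * g x)
      (Bornology.cobounded (EuclideanSpace ℝ (Fin n))) (nhds c₀)) :
    Filter.Tendsto
      (fun q : EuclideanSpace ℝ (Fin n) => ‖q‖ ^ ν * ∫ y, f y * g (y - q))
      (Bornology.cobounded (EuclideanSpace ℝ (Fin n))) (nhds (c₀ * ∫ y, f y)) := by
  have hν₀ : 0 ≤ ν := (Nat.cast_nonneg n).trans hν.le
  have hdim : (Module.finrank ℝ (EuclideanSpace ℝ (Fin n)) : ℝ) = n := by simp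
  have hfi : Integrable f := integrable_of_abs_le_one_add_norm_rpow_neg
    hf.aestronglyMeasurable (hdim ▸ hν.trans hρ) hfb
  have hgi : Integrable g := integrable_of_abs_le_one_add_norm_rpow_neg
    hg.aestronglyMeasurable (hdim ▸ hν) hgb
  exact tendsto_norm_rpow_mul_integral_mul_comp_sub hν₀ hfi hgi
    (norm_rpow_mul_abs_le_const hβ.le hν₀ hρ.le hfb)
    (norm_rpow_mul_abs_le_const hβ.le hν₀ le_rfl hgb)
    (tendsto_norm_rpow_mul_of_abs_le hν₀ hρ hfb) hgas

/-- Interaction asymptotics: if `|f(x)| ≤ β(1+|x|)^(−ρ)`, `|g(x)| ≤ β(1+|x|)^(−ν)` with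
`ρ > ν > n`, and `|x|^ν g(x) → c₀` as `|x| → ∞`, then
`|q|^ν ∫ f(y) g(y−q) dy → c₀ ∫ f` as `|q| → ∞`. -/
theorem stmt14 (n : ℕ) (hn : 1 ≤ n) (ν ρ β c₀ : ℝ) (hν : (n : ℝ) < ν) (hρ : ν < ρ)
    (hβ : 0 < β)
    (f g : EuclideanSpace ℝ (Fin n) → ℝ) (hf : Measurable f) (hg : Measurable g)
    (hfb : ∀ x, |f x| ≤ β * (1 + ‖x‖) ^ (-ρ))
    (hgb : ∀ x, |g x| ≤ β * (1 + ‖x‖) ^ (-ν))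
    (hgas : Filter.Tendsto (fun x : EuclideanSpace ℝ (Fin n) => ‖x‖ ^ ν * g x)
      (Bornology.cobounded (EuclideanSpace ℝ (Fin n))) (nhds c₀)) :
    Filter.Tendsto
      (fun q : EuclideanSpace ℝ (Fin n) => ‖q‖ ^ ν * ∫ y, f y * g (y - q))
      (Bornology.cobounded (EuclideanSpace ℝ (Fin n))) (nhds (c₀ * ∫ y, f y)) :=
  stmt14_general n ν ρ β c₀ hν hρ hβ f g hf hg hfb hgb hgas
end
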